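/- There is a universal constant c₀ > 0 such that for all smooth functions f, g, h : ℝ² → ℝ which are 2-periodic in each variable, one has ∫_{(-1,1)²} |f g h| dy ≤ c₀ (‖f‖₀ ‖f‖_{1,2})^{1/2} ‖(g,∂₁g)‖₀ ‖h‖₀, and consequently ∫_{(-1,1)²} |f g h| dy ≤ c₀ ‖(f,∂₂f)‖₀ ‖(g,∂₁g)‖₀ ‖h‖₀. -/

import Mathlib

open MeasureTheory

noncomputable section

/-- A point of the plane `ℝ²`. -/
abbrev Pt := ℝ × ℝ

/-- The periodic cell `(-1,1)²`. -/
def cell : Set Pt := Set.Ioo (-1 : ℝ) 1 ×ˢ Set.Ioo (-1 : ℝ) 1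

/-- `f` is 2-periodic in each variable. -/
def Periodic2 (f : Pt → ℝ) : Prop :=
  (∀ y : Pt, f (y.1 + 2, y.2) = f y) ∧ ∀ y : Pt, f (y.1, y.2 + 2) = f y

/-- Partial derivative in the first variable. -/
def p1 (f : Pt → ℝ) : Pt → ℝ := fun y => fderiv ℝ f y (1, 0)

/-- Partial derivative in the second variable. -/
def p2 (f : Pt → ℝ) : Pt → ℝ := fun y => fderiv ℝ f y (0, 1)

/-- Iterated partial derivative `∂₁^a ∂₂^b f`. -/
def pd (a b : ℕ) (f : Pt → ℝ) : Pt → ℝ := p1^[a] (p2^[b] f)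

/-- Square of the `L²((-1,1)²)` norm. -/
def L2sq (f : Pt → ℝ) : ℝ := ∫ y in cell, (f y) ^ 2

/-- The `L²((-1,1)²)` norm `‖f‖₀`. -/
def L2 (f : Pt → ℝ) : ℝ := Real.sqrt (L2sq f)

/-- Square of the Sobolev norm `‖f‖_i² = Σ_{|α| ≤ i} ‖∂^α f‖₀²`. -/
def sobSq (i : ℕ) (f : Pt → ℝ) : ℝ :=
  ∑ a ∈ Finset.range (i + 1), ∑ b ∈ Finset.range (i + 1 - a), L2sq (pd a b f)

/-- The Sobolev norm `‖f‖_i`. -/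
def sob (i : ℕ) (f : Pt → ℝ) : ℝ := Real.sqrt (sobSq i f)

/-- Square of the homogeneous seminorm `‖∇^i f‖₀² = Σ_{|α| = i} ‖∂^α f‖₀²`. -/
def gradSq (i : ℕ) (f : Pt → ℝ) : ℝ :=
  ∑ a ∈ Finset.range (i + 1), L2sq (pd a (i - a) f)

/-- Norm of a pair of functions: `‖(f,g)‖₀ = √(‖f‖₀² + ‖g‖₀²)`. -/
def pairN (f g : Pt → ℝ) : ℝ := Real.sqrt (L2sq f + L2sq g)

/-!
Averaging the fundamental theorem of calculus for `t ↦ f(x,t)²` over `t ∈ (-1,1)` gives the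
one-dimensional Agmon bound `f(x,y)² ≤ F(x) := ∫ (½ f² + 2 |f ∂₂f|)(x,t) dt`, and likewise
`g(x,y)² ≤ G(y)` with `∂₁g`. Hence `|fgh| ≤ √(F(x) G(y)) |h|`, and Cauchy–Schwarz with Fubini gives
`∫ |fgh| ≤ (∫ F)^{1/2} (∫ G)^{1/2} ‖h‖₀`. By Cauchy–Schwarz again, `∫ F ≤ 3 ‖f‖₀ ‖(f,∂₂f)‖₀` and
`∫ G ≤ 3 ‖(g,∂₁g)‖₀²`, so `c₀ = 3` works.
-/

open Set

theorem integral_mul_le_sqrt_mul_sqrt {α : Type*} [MeasurableSpace α] {μ : Measure α}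
    {φ ψ : α → ℝ} (hφ : Integrable (fun x => φ x ^ 2) μ) (hψ : Integrable (fun x => ψ x ^ 2) μ)
    (hφψ : Integrable (fun x => φ x * ψ x) μ) :
    ∫ x, φ x * ψ x ∂μ ≤ √(∫ x, φ x ^ 2 ∂μ) * √(∫ x, ψ x ^ 2 ∂μ) := by
  set A := ∫ x, φ x ^ 2 ∂μ
  set B := ∫ x, ψ x ^ 2 ∂μ
  set C := ∫ x, φ x * ψ x ∂μ
  -- `s ↦ ∫ (s φ - ψ)²` is a nonnegative quadratic, so its discriminant is nonpositive.
  have hquad : ∀ s : ℝ, 0 ≤ A * (s * s) + (-2 * C) * s + B := fun s => by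
    have hexp : (fun x => (s * φ x - ψ x) ^ 2)
        = fun x => s * s * φ x ^ 2 - 2 * s * (φ x * ψ x) + ψ x ^ 2 := funext fun x => by ring
    have : 0 ≤ ∫ x, (s * φ x - ψ x) ^ 2 ∂μ := integral_nonneg fun x => sq_nonneg _
    rw [hexp, integral_add (f := fun x => s * s * φ x ^ 2 - 2 * s * (φ x * ψ x))
        ((hφ.const_mul _).sub (hφψ.const_mul _)) hψ,
      integral_sub (hφ.const_mul _) (hφψ.const_mul _), integral_const_mul,
      integral_const_mul] at this
    linarith
  have hdisc : C ^ 2 ≤ A * B := by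
    have := discrim_le_zero hquad
    rw [discrim] at this
    linarith
  calc C ≤ |C| := le_abs_self C
    _ ≤ √(A * B) := Real.abs_le_sqrt hdisc
    _ = √A * √B := Real.sqrt_mul (integral_nonneg fun x => sq_nonneg _) B

theorem sq_sub_sq_le_setIntegral_of_hasDerivAt {u u' : ℝ → ℝ} {a b x y : ℝ}
    (hu : ∀ t, HasDerivAt u (u' t) t) (hu' : Continuous u') (hx : x ∈ Icc a b)
    (hy : y ∈ Icc a b) :
    u x ^ 2 - u y ^ 2 ≤ ∫ t in Ioo a b, 2 * |u t * u' t| := by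
  have hu_cont : Continuous u := continuous_iff_continuousAt.2 fun t => (hu t).continuousAt
  have hdu2 : Continuous fun t => 2 * u t * u' t := by fun_prop
  have hftc : ∫ t in y..x, 2 * u t * u' t = u x ^ 2 - u y ^ 2 :=
    intervalIntegral.integral_eq_sub_of_hasDerivAt
      (fun t _ => by simpa [mul_comm, mul_left_comm] using (hu t).fun_pow 2)
      (hdu2.intervalIntegrable _ _)
  have hsub : uIoc y x ⊆ Icc a b :=
    Ioc_subset_Icc_self.trans (Icc_subset_Icc (le_min hy.1 hx.1) (max_le hy.2 hx.2))
  calc u x ^ 2 - u y ^ 2 ≤ ‖∫ t in y..x, 2 * u t * u' t‖ := hftc ▸ le_abs_self _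
    _ ≤ ∫ t in uIoc y x, ‖2 * u t * u' t‖ :=
      intervalIntegral.norm_integral_le_integral_norm_uIoc
    _ ≤ ∫ t in Icc a b, ‖2 * u t * u' t‖ :=
      setIntegral_mono_set hdu2.norm.integrableOn_Icc
        (ae_of_all _ fun t => norm_nonneg _) hsub.eventuallyLE
    _ = ∫ t in Ioo a b, 2 * |u t * u' t| := by
      rw [integral_Icc_eq_integral_Ioo]
      simp only [Real.norm_eq_abs, abs_mul, abs_two, mul_assoc]

theorem sq_le_setIntegral_of_hasDerivAt {u u' : ℝ → ℝ} {a b x : ℝ} (hab : a < b)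
    (hu : ∀ t, HasDerivAt u (u' t) t) (hu' : Continuous u') (hx : x ∈ Icc a b) :
    u x ^ 2 ≤ ∫ t in Ioo a b, ((b - a)⁻¹ * u t ^ 2 + 2 * |u t * u' t|) := by
  have hu_cont : Continuous u := continuous_iff_continuousAt.2 fun t => (hu t).continuousAt
  have hint : ∀ {v : ℝ → ℝ}, Continuous v → IntegrableOn v (Ioo a b) := fun hv =>
    hv.integrableOn_Icc.mono_set Ioo_subset_Icc_self
  set D := ∫ t in Ioo a b, 2 * |u t * u' t|
  have hmono : ∫ _ in Ioo a b, u x ^ 2 ≤ ∫ y in Ioo a b, (u y ^ 2 + D) :=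
    setIntegral_mono_on (hint continuous_const) (hint (by fun_prop)) measurableSet_Ioo
      fun y hy => by
        linarith [sq_sub_sq_le_setIntegral_of_hasDerivAt hu hu' hx (Ioo_subset_Icc_self hy)]
  have hlen : volume.real (Ioo a b) = b - a := by simp [hab.le]
  rw [setIntegral_const,
    integral_add (hint (v := fun y => u y ^ 2) (by fun_prop)) (hint continuous_const),
    setIntegral_const, hlen, smul_eq_mul, smul_eq_mul] at hmono
  rw [integral_add (hint (by fun_prop)) (hint (by fun_prop)), integral_const_mul]
  have hba : 0 < b - a := sub_pos.2 hab
  calc u x ^ 2 = (b - a)⁻¹ * ((b - a) * u x ^ 2) := by field_simp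
    _ ≤ (b - a)⁻¹ * ((∫ t in Ioo a b, u t ^ 2) + (b - a) * D) := by gcongr
    _ = _ := by rw [mul_add, ← mul_assoc, inv_mul_cancel₀ hba.ne', one_mul]

theorem continuous_setIntegral_Ioo {X : Type*} [TopologicalSpace X] [FirstCountableTopology X]
    [LocallyCompactSpace X] {F : X → ℝ → ℝ} (hF : Continuous (Function.uncurry F)) (a b : ℝ) :
    Continuous fun x => ∫ t in Ioo a b, F x t := by
  simpa only [integral_Icc_eq_integral_Ioo] using
    continuous_parametric_integral_of_continuous (μ := volume) hF isCompact_Icc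

theorem measurableSet_cell : MeasurableSet cell := measurableSet_Ioo.prod measurableSet_Ioo

theorem Continuous.integrableOn_cell {F : Pt → ℝ} (hF : Continuous F) : IntegrableOn F cell :=
  (hF.continuousOn.integrableOn_compact (isCompact_Icc.prod isCompact_Icc)).mono_set
    (prod_mono Ioo_subset_Icc_self Ioo_subset_Icc_self)

theorem L2sq_nonneg (u : Pt → ℝ) : 0 ≤ L2sq u :=
  setIntegral_nonneg measurableSet_cell fun _ _ => sq_nonneg _

theorem L2_le_pairN_left (u v : Pt → ℝ) : L2 u ≤ pairN u v :=
  Real.sqrt_le_sqrt (le_add_of_nonneg_right (L2sq_nonneg v))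

theorem L2_le_pairN_right (u v : Pt → ℝ) : L2 v ≤ pairN u v :=
  Real.sqrt_le_sqrt (le_add_of_nonneg_left (L2sq_nonneg u))

theorem integral_abs_mul_le_L2_mul_L2 {u v : Pt → ℝ} (hu : Continuous u) (hv : Continuous v) :
    ∫ z in cell, |u z * v z| ≤ L2 u * L2 v := by
  simpa only [L2, L2sq, abs_mul, sq_abs] using
    integral_mul_le_sqrt_mul_sqrt (φ := fun z => |u z|) (ψ := fun z => |v z|)
      (hu.abs.pow 2).integrableOn_cell (hv.abs.pow 2).integrableOn_cell
      (hu.abs.mul hv.abs).integrableOn_cell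

def agmonDensity (u v : Pt → ℝ) (z : Pt) : ℝ := 2⁻¹ * u z ^ 2 + 2 * |u z * v z|

theorem Continuous.agmonDensity {u v : Pt → ℝ} (hu : Continuous u) (hv : Continuous v) :
    Continuous (agmonDensity u v) := by
  unfold _root_.agmonDensity
  fun_prop

theorem integral_agmonDensity_le {u v : Pt → ℝ} (hu : Continuous u) (hv : Continuous v) :
    ∫ z in cell, agmonDensity u v z ≤ 3 * (L2 u * pairN u v) := by
  have hsplit : ∫ z in cell, agmonDensity u v z =
      2⁻¹ * L2 u ^ 2 + 2 * ∫ z in cell, |u z * v z| := by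
    rw [L2, Real.sq_sqrt (L2sq_nonneg u), L2sq, ← integral_const_mul, ← integral_const_mul,
      ← integral_add (by fun_prop : Continuous fun z => 2⁻¹ * u z ^ 2).integrableOn_cell
        (by fun_prop : Continuous fun z => 2 * |u z * v z|).integrableOn_cell]
    rfl
  have hL2 : 0 ≤ L2 u := Real.sqrt_nonneg _
  have hu_le := mul_le_mul_of_nonneg_left (L2_le_pairN_left u v) hL2
  have hv_le := mul_le_mul_of_nonneg_left (L2_le_pairN_right u v) hL2
  rw [hsplit]
  nlinarith [integral_abs_mul_le_L2_mul_L2 hu hv]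

theorem ContDiff.continuous_p1 {f : Pt → ℝ} (hf : ContDiff ℝ 1 f) : Continuous (p1 f) :=
  (hf.continuous_fderiv one_ne_zero).clm_apply continuous_const

theorem ContDiff.continuous_p2 {f : Pt → ℝ} (hf : ContDiff ℝ 1 f) : Continuous (p2 f) :=
  (hf.continuous_fderiv one_ne_zero).clm_apply continuous_const

theorem Differentiable.hasDerivAt_p1 {f : Pt → ℝ} (hf : Differentiable ℝ f) (s y : ℝ) :
    HasDerivAt (fun s => f (s, y)) (p1 f (s, y)) s :=
  (hf (s, y)).hasFDerivAt.comp_hasDerivAt s ((hasDerivAt_id s).prodMk (hasDerivAt_const s y))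

theorem Differentiable.hasDerivAt_p2 {f : Pt → ℝ} (hf : Differentiable ℝ f) (x t : ℝ) :
    HasDerivAt (fun t => f (x, t)) (p2 f (x, t)) t :=
  (hf (x, t)).hasFDerivAt.comp_hasDerivAt t ((hasDerivAt_const t x).prodMk (hasDerivAt_id t))

def sliceEnergy₁ (g : Pt → ℝ) (y : ℝ) : ℝ :=
  ∫ s in Ioo (-1 : ℝ) 1, agmonDensity g (p1 g) (s, y)

def sliceEnergy₂ (f : Pt → ℝ) (x : ℝ) : ℝ :=
  ∫ t in Ioo (-1 : ℝ) 1, agmonDensity f (p2 f) (x, t)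

theorem continuous_sliceEnergy₁ {f : Pt → ℝ} (hf : ContDiff ℝ 1 f) : Continuous (sliceEnergy₁ f) :=
  continuous_setIntegral_Ioo (F := fun y s => agmonDensity f (p1 f) (s, y))
    ((hf.continuous.agmonDensity hf.continuous_p1).comp continuous_swap) _ _

theorem continuous_sliceEnergy₂ {f : Pt → ℝ} (hf : ContDiff ℝ 1 f) : Continuous (sliceEnergy₂ f) :=
  continuous_setIntegral_Ioo (F := fun x t => agmonDensity f (p2 f) (x, t))
    (hf.continuous.agmonDensity hf.continuous_p2) _ _

theorem sq_le_sliceEnergy₁ {f : Pt → ℝ} (hf : ContDiff ℝ 1 f) {z : Pt}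
    (hz : z.1 ∈ Icc (-1 : ℝ) 1) : f z ^ 2 ≤ sliceEnergy₁ f z.2 := by
  have h := sq_le_setIntegral_of_hasDerivAt (by norm_num)
    ((hf.differentiable one_ne_zero).hasDerivAt_p1 · z.2)
    (hf.continuous_p1.comp (continuous_id.prodMk continuous_const)) hz
  rwa [show ((1 : ℝ) - -1)⁻¹ = 2⁻¹ by norm_num] at h

theorem sq_le_sliceEnergy₂ {f : Pt → ℝ} (hf : ContDiff ℝ 1 f) {z : Pt}
    (hz : z.2 ∈ Icc (-1 : ℝ) 1) : f z ^ 2 ≤ sliceEnergy₂ f z.1 := by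
  have h := sq_le_setIntegral_of_hasDerivAt (by norm_num)
    ((hf.differentiable one_ne_zero).hasDerivAt_p2 z.1)
    (hf.continuous_p2.comp (continuous_const.prodMk continuous_id)) hz
  rwa [show ((1 : ℝ) - -1)⁻¹ = 2⁻¹ by norm_num] at h

theorem integral_sliceEnergy₁ {f : Pt → ℝ} (hf : ContDiff ℝ 1 f) :
    ∫ y in Ioo (-1 : ℝ) 1, sliceEnergy₁ f y = ∫ z in cell, agmonDensity f (p1 f) z := by
  have hi : IntegrableOn (fun z : Pt => agmonDensity f (p1 f) z.swap) cell :=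
    ((hf.continuous.agmonDensity hf.continuous_p1).comp continuous_swap).integrableOn_cell
  rw [cell, Measure.volume_eq_prod] at hi ⊢
  rw [← setIntegral_prod_swap, setIntegral_prod _ hi]
  rfl

theorem integral_sliceEnergy₂ {f : Pt → ℝ} (hf : ContDiff ℝ 1 f) :
    ∫ x in Ioo (-1 : ℝ) 1, sliceEnergy₂ f x = ∫ z in cell, agmonDensity f (p2 f) z := by
  have hi := (hf.continuous.agmonDensity hf.continuous_p2).integrableOn_cell
  rw [cell, Measure.volume_eq_prod] at hi ⊢
  rw [setIntegral_prod _ hi]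
  rfl

theorem integral_abs_mul_mul_le_of_sq_le {f g h : Pt → ℝ} {F G : ℝ → ℝ} (hf : Continuous f)
    (hg : Continuous g) (hh : Continuous h) (hF : Continuous F) (hG : Continuous G)
    (hfF : ∀ z ∈ cell, f z ^ 2 ≤ F z.1) (hgG : ∀ z ∈ cell, g z ^ 2 ≤ G z.2) :
    ∫ z in cell, |f z * g z * h z| ≤
      √(∫ x in Ioo (-1 : ℝ) 1, F x) * √(∫ y in Ioo (-1 : ℝ) 1, G y) * L2 h := by
  have hF0 : ∀ z ∈ cell, 0 ≤ F z.1 := fun z hz => (sq_nonneg _).trans (hfF z hz)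
  have hG0 : ∀ z ∈ cell, 0 ≤ G z.2 := fun z hz => (sq_nonneg _).trans (hgG z hz)
  set φ : Pt → ℝ := fun z => √(F z.1) * √(G z.2)
  have hφ : Continuous φ := by fun_prop
  have hpt : ∀ z ∈ cell, |f z * g z * h z| ≤ φ z * |h z| := fun z hz => by
    rw [abs_mul, abs_mul]
    show |f z| * |g z| * |h z| ≤ √(F z.1) * √(G z.2) * |h z|
    gcongr
    exacts [Real.abs_le_sqrt (hfF z hz), Real.abs_le_sqrt (hgG z hz)]
  have hφsq :
      ∫ z in cell, φ z ^ 2 = (∫ x in Ioo (-1 : ℝ) 1, F x) * ∫ y in Ioo (-1 : ℝ) 1, G y := by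
    rw [setIntegral_congr_fun measurableSet_cell fun z hz => by
      rw [mul_pow, Real.sq_sqrt (hF0 z hz), Real.sq_sqrt (hG0 z hz)]]
    rw [cell, Measure.volume_eq_prod, setIntegral_prod_mul]
  have hFint : 0 ≤ ∫ x in Ioo (-1 : ℝ) 1, F x :=
    setIntegral_nonneg measurableSet_Ioo fun x hx => hF0 (x, 0) ⟨hx, by norm_num, by norm_num⟩
  calc ∫ z in cell, |f z * g z * h z|
      ≤ ∫ z in cell, φ z * |h z| :=
        setIntegral_mono_on ((hf.mul hg).mul hh).abs.integrableOn_cell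
          (hφ.mul hh.abs).integrableOn_cell measurableSet_cell hpt
    _ ≤ √(∫ z in cell, φ z ^ 2) * √(∫ z in cell, |h z| ^ 2) :=
        integral_mul_le_sqrt_mul_sqrt (hφ.pow 2).integrableOn_cell
          (hh.abs.pow 2).integrableOn_cell (hφ.mul hh.abs).integrableOn_cell
    _ = _ := by simp only [hφsq, Real.sqrt_mul hFint, sq_abs, L2, L2sq]

theorem sqrt_integral_sliceEnergy₁_le {g : Pt → ℝ} (hg : ContDiff ℝ 1 g) :
    √(∫ y in Ioo (-1 : ℝ) 1, sliceEnergy₁ g y) ≤ √3 * pairN g (p1 g) := by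
  have hP : 0 ≤ pairN g (p1 g) := Real.sqrt_nonneg _
  calc √(∫ y in Ioo (-1 : ℝ) 1, sliceEnergy₁ g y)
      ≤ √(3 * (L2 g * pairN g (p1 g))) := by
        rw [integral_sliceEnergy₁ hg]
        exact Real.sqrt_le_sqrt (integral_agmonDensity_le hg.continuous hg.continuous_p1)
    _ ≤ √(3 * pairN g (p1 g) ^ 2) := by
        gcongr
        rw [sq]
        exact mul_le_mul_of_nonneg_right (L2_le_pairN_left _ _) hP
    _ = √3 * pairN g (p1 g) := by rw [Real.sqrt_mul (by norm_num), Real.sqrt_sq hP]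

theorem sqrt_integral_sliceEnergy₂_le {f : Pt → ℝ} (hf : ContDiff ℝ 1 f) :
    √(∫ x in Ioo (-1 : ℝ) 1, sliceEnergy₂ f x) ≤ √3 * √(L2 f * pairN f (p2 f)) := by
  rw [← Real.sqrt_mul (by norm_num), integral_sliceEnergy₂ hf]
  exact Real.sqrt_le_sqrt (integral_agmonDensity_le hf.continuous hf.continuous_p2)

theorem sqrt_L2_mul_pairN_le (u v : Pt → ℝ) : √(L2 u * pairN u v) ≤ pairN u v := by
  have hP : 0 ≤ pairN u v := Real.sqrt_nonneg _
  calc √(L2 u * pairN u v) ≤ √(pairN u v * pairN u v) :=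
        Real.sqrt_le_sqrt (mul_le_mul_of_nonneg_right (L2_le_pairN_left u v) hP)
    _ = pairN u v := Real.sqrt_mul_self hP

/-- product estimate: there is a universal constant `c₀ > 0` such that
for all smooth 2-periodic functions `f, g, h`,
`∫ |fgh| ≤ c₀ (‖f‖₀‖f‖_{1,2})^{1/2} ‖(g,∂₁g)‖₀ ‖h‖₀` and consequently
`∫ |fgh| ≤ c₀ ‖(f,∂₂f)‖₀ ‖(g,∂₁g)‖₀ ‖h‖₀`, where `‖f‖_{1,2} = √(‖f‖₀² + ‖∂₂f‖₀²)`. -/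
theorem statement4 :
    ∃ c₀ : ℝ, 0 < c₀ ∧
      ∀ f g h : Pt → ℝ,
        ContDiff ℝ (⊤ : ℕ∞) f → ContDiff ℝ (⊤ : ℕ∞) g → ContDiff ℝ (⊤ : ℕ∞) h →
        Periodic2 f → Periodic2 g → Periodic2 h →
        (∫ y in cell, |f y * g y * h y|) ≤
            c₀ * Real.sqrt (L2 f * pairN f (p2 f)) * pairN g (p1 g) * L2 h ∧
        (∫ y in cell, |f y * g y * h y|) ≤
            c₀ * pairN f (p2 f) * pairN g (p1 g) * L2 h := by
  refine ⟨3, by norm_num, fun f g h hf hg hh _ _ _ => ?_⟩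
  have hf1 : ContDiff ℝ 1 f := hf.of_le (by norm_cast)
  have hg1 : ContDiff ℝ 1 g := hg.of_le (by norm_cast)
  have hL2h : 0 ≤ L2 h := Real.sqrt_nonneg _
  have hPg : 0 ≤ pairN g (p1 g) := Real.sqrt_nonneg _
  have hfirst : ∫ z in cell, |f z * g z * h z| ≤
      3 * √(L2 f * pairN f (p2 f)) * pairN g (p1 g) * L2 h := calc
    _ ≤ √(∫ x in Ioo (-1 : ℝ) 1, sliceEnergy₂ f x) *
          √(∫ y in Ioo (-1 : ℝ) 1, sliceEnergy₁ g y) * L2 h :=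
        integral_abs_mul_mul_le_of_sq_le hf.continuous hg.continuous hh.continuous
          (continuous_sliceEnergy₂ hf1) (continuous_sliceEnergy₁ hg1)
          (fun z hz => sq_le_sliceEnergy₂ hf1 (Ioo_subset_Icc_self hz.2))
          (fun z hz => sq_le_sliceEnergy₁ hg1 (Ioo_subset_Icc_self hz.1))
    _ ≤ (√3 * √(L2 f * pairN f (p2 f))) * (√3 * pairN g (p1 g)) * L2 h := by
        gcongr
        exacts [sqrt_integral_sliceEnergy₂_le hf1, sqrt_integral_sliceEnergy₁_le hg1]
    _ = _ := by rw [mul_mul_mul_comm, Real.mul_self_sqrt (by norm_num)]; ring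
  refine ⟨hfirst, hfirst.trans ?_⟩
  gcongr
  exact sqrt_L2_mul_pairN_le f (p2 f)
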